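/- arXiv:cs/0101021 — 2 statements merged into one kernel-verified Lean document; each statement's English description precedes it below -/
import Mathlib

section
/- Let H be a finite graph on a vertex set V such that every integer k with n^{0.6} ≤ k ≤ n^{0.7} is either the degree of some vertex or k−1 is the degree of some vertex. Then the sum of the degrees of all vertices of H is at least (n^{0.7}−n^{0.6})·n^{0.6}/4 (for n sufficiently large). -/
lemma aux_sum_image_le {α β : Type*} [DecidableEq β] (s : Finset α) (f : α → β) (g : β → ℕ) :
    ∑ d ∈ s.image f, g d ≤ ∑ v ∈ s, g (f v) := by
  classical
  induction s using Finset.induction with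
  | empty => simp
  | @insert a s h ih =>
    rw [Finset.image_insert, Finset.sum_insert h]
    by_cases hf : f a ∈ s.image f
    · rw [Finset.insert_eq_self.2 hf]
      exact le_trans ih (Nat.le_add_left _ _)
    · rw [Finset.sum_insert hf]
      exact Nat.add_le_add_left ih _

/-- Counting step of the degree-avoidance lemma: if every integer k with
n^0.6 ≤ k ≤ n^0.7 is realized as a degree, or k-1 is, then the degree sum is
at least (n^0.7 - n^0.6)·n^0.6/4, for n sufficiently large. -/
theorem degree_sum_lower_bound :
    ∃ N : ℕ, ∀ n : ℕ, N ≤ n →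
      ∀ (V : Type) [Fintype V] [DecidableEq V] (H : SimpleGraph V) [DecidableRel H.Adj],
        (∀ k : ℕ, (n : ℝ) ^ (0.6 : ℝ) ≤ (k : ℝ) → (k : ℝ) ≤ (n : ℝ) ^ (0.7 : ℝ) →
          (∃ v : V, H.degree v = k) ∨ (∃ v : V, H.degree v = k - 1)) →
        ((n : ℝ) ^ (0.7 : ℝ) - (n : ℝ) ^ (0.6 : ℝ)) * (n : ℝ) ^ (0.6 : ℝ) / 4
          ≤ ∑ v : V, (H.degree v : ℝ) := by
  refine ⟨1024, fun n hn V _ _ H _ hdeg => ?_⟩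
  have hn0 : (0:ℝ) < (n:ℝ) := by
    have : (1024:ℕ) ≤ n := hn
    exact_mod_cast Nat.lt_of_lt_of_le (by norm_num) this
  set a : ℝ := (n:ℝ) ^ (0.6:ℝ) with ha_def
  set b : ℝ := (n:ℝ) ^ (0.7:ℝ) with hb_def
  -- n^0.1 ≥ 2
  have h1024 : ((1024:ℕ):ℝ) ≤ (n:ℝ) := by exact_mod_cast hn
  have hr : (2:ℝ) ≤ (n:ℝ) ^ (0.1:ℝ) := by
    have h2 : ((1024:ℝ)) ^ (0.1:ℝ) = 2 := by
      rw [show (1024:ℝ) = (2:ℝ) ^ (10:ℝ) by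
        rw [show (10:ℝ) = ((10:ℕ):ℝ) by norm_num, Real.rpow_natCast]; norm_num]
      rw [← Real.rpow_mul (by norm_num)]
      norm_num
    calc (2:ℝ) = (1024:ℝ) ^ (0.1:ℝ) := h2.symm
      _ ≤ (n:ℝ) ^ (0.1:ℝ) := by
          apply Real.rpow_le_rpow (by norm_num) (by exact_mod_cast h1024) (by norm_num)
  have ha64 : (64:ℝ) ≤ a := by
    have h06 : (0.6:ℝ) = 0.1 * ((6:ℕ):ℝ) := by norm_num
    have : a = ((n:ℝ) ^ (0.1:ℝ)) ^ (6:ℕ) := by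
      rw [ha_def, h06, Real.rpow_mul hn0.le, Real.rpow_natCast]
    rw [this]
    calc (64:ℝ) = 2 ^ (6:ℕ) := by norm_num
      _ ≤ ((n:ℝ) ^ (0.1:ℝ)) ^ (6:ℕ) := by
          exact pow_le_pow_left₀ (by norm_num) hr 6
  have ha0 : (0:ℝ) < a := by linarith
  have hb2a : 2 * a ≤ b := by
    have : b = a * (n:ℝ) ^ (0.1:ℝ) := by
      rw [ha_def, hb_def, ← Real.rpow_add hn0]; norm_num
    rw [this]
    nlinarith
  -- natural number bounds
  set c : ℕ := ⌈a⌉₊ with hc_def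
  set m : ℕ := ⌊b⌋₊ with hm_def
  have hac : a ≤ (c:ℝ) := Nat.le_ceil a
  have hca : (c:ℝ) < a + 1 := Nat.ceil_lt_add_one ha0.le
  have hmb : (m:ℝ) ≤ b := Nat.floor_le (by linarith)
  have hbm : b - 1 < (m:ℝ) := Nat.sub_one_lt_floor b
  have hcm : c ≤ m := by
    have : (c:ℝ) ≤ (m:ℝ) := by linarith
    exact_mod_cast this
  have hc1 : 1 ≤ c := by
    have : (1:ℝ) ≤ (c:ℝ) := by linarith
    exact_mod_cast this
  classical
  set D : Finset ℕ := Finset.univ.image (fun v => H.degree v) with hD_def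
  set S : Finset ℕ := D ∩ Finset.Icc (c-1) m with hS_def
  -- covering
  have hcov : Finset.Icc c m ⊆ S ∪ S.image (· + 1) := by
    intro k hk
    rw [Finset.mem_Icc] at hk
    obtain ⟨hk1, hk2⟩ := hk
    have hka : a ≤ (k:ℝ) := le_trans hac (by exact_mod_cast hk1)
    have hkb : (k:ℝ) ≤ b := le_trans (by exact_mod_cast hk2) hmb
    rcases hdeg k hka hkb with ⟨v, hv⟩ | ⟨v, hv⟩
    · apply Finset.mem_union_left
      rw [hS_def, Finset.mem_inter, Finset.mem_Icc]
      exact ⟨Finset.mem_image.2 ⟨v, Finset.mem_univ v, hv⟩, by omega, hk2⟩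
    · apply Finset.mem_union_right
      apply Finset.mem_image.2
      refine ⟨k - 1, ?_, by omega⟩
      rw [hS_def, Finset.mem_inter, Finset.mem_Icc]
      exact ⟨Finset.mem_image.2 ⟨v, Finset.mem_univ v, hv⟩, by omega, by omega⟩
  have hcard : m + 1 - c ≤ 2 * S.card := by
    calc m + 1 - c = (Finset.Icc c m).card := (Nat.card_Icc c m).symm
      _ ≤ (S ∪ S.image (· + 1)).card := Finset.card_le_card hcov
      _ ≤ S.card + (S.image (· + 1)).card := Finset.card_union_le _ _
      _ ≤ S.card + S.card := by
          exact Nat.add_le_add_left (Finset.card_image_le) _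
      _ = 2 * S.card := by ring
  -- sums
  have hsum1 : ∑ d ∈ S, d ≤ ∑ v : V, H.degree v := by
    calc ∑ d ∈ S, d ≤ ∑ d ∈ D, d := by
          apply Finset.sum_le_sum_of_subset (Finset.inter_subset_left)
      _ ≤ ∑ v : V, H.degree v := aux_sum_image_le Finset.univ (fun v => H.degree v) id
  have hsum2 : S.card * (c - 1) ≤ ∑ d ∈ S, d := by
    have := Finset.card_nsmul_le_sum S id (c - 1) (fun x hx => by
      rw [hS_def, Finset.mem_inter, Finset.mem_Icc] at hx
      exact hx.2.1)
    simpa [smul_eq_mul] using this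
  -- combine in ℕ then cast
  have key : (m + 1 - c) * (c - 1) ≤ 2 * ∑ v : V, H.degree v := by
    calc (m + 1 - c) * (c - 1) ≤ 2 * S.card * (c - 1) :=
          Nat.mul_le_mul_right _ hcard
      _ = 2 * (S.card * (c - 1)) := by ring
      _ ≤ 2 * ∑ d ∈ S, d := Nat.mul_le_mul_left _ hsum2
      _ ≤ 2 * ∑ v : V, H.degree v := Nat.mul_le_mul_left _ hsum1
  -- go to ℝ
  have keyR : ((m:ℝ) + 1 - c) * ((c:ℝ) - 1) ≤ 2 * ∑ v : V, (H.degree v : ℝ) := by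
    have := (Nat.cast_le (α := ℝ)).2 key
    push_cast [Nat.cast_sub (by omega : c ≤ m + 1), Nat.cast_sub hc1] at this
    linarith [this]
  nlinarith [keyR, ha64, hb2a, hca, hac, hmb, hbm]
end

section
/- Let T be a finite binary tree whose nodes are weighted by positive reals, such that for every internal node with weight w and children of weights w₁, w₂ one has max(w₁,w₂) ≤ w/r for a fixed constant r > 1 and w₁ + w₂ ≥ w. If every leaf has weight at most λ and the root has weight w₀, then the number of nodes of T whose weight exceeds r^{i−1}·λ is less than (Σ_{leaves ℓ} w(ℓ)) / (r^{i−1}·λ) for every integer i ≥ 1. -/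
/-- A finite binary tree with real node weights (the recursion tree of the
encoding algorithm, node weights being graph sizes). -/
inductive WTree where
  | leaf : ℝ → WTree
  | node : ℝ → WTree → WTree → WTree

namespace WTree

/-- The weight of the root node. -/
def weight : WTree → ℝ
  | leaf w => w
  | node w _ _ => w

/-- The total weight of the leaves. -/
def leafSum : WTree → ℝ
  | leaf w => w
  | node _ l r => l.leafSum + r.leafSum

/-- The list of the weights of all nodes of the tree. -/
def nodeWeights : WTree → List ℝ
  | leaf w => [w]
  | node w l r => w :: (l.nodeWeights ++ r.nodeWeights)

/-- Validity: all weights positive; every leaf has weight at most λ; every internal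
node of weight w has children of weights w₁, w₂ with max(w₁,w₂) ≤ w/r and w₁+w₂ ≥ w. -/
def Valid (r lam : ℝ) : WTree → Prop
  | leaf w => 0 < w ∧ w ≤ lam
  | node w l rt => 0 < w ∧ max l.weight rt.weight ≤ w / r ∧ w ≤ l.weight + rt.weight ∧
      Valid r lam l ∧ Valid r lam rt

lemma valid_basic {r lam : ℝ} (hr : 1 < r) : ∀ t : WTree, Valid r lam t →
    0 < t.leafSum ∧ t.weight ≤ t.leafSum := by
  intro t
  induction t with
  | leaf w => intro h; exact ⟨h.1, le_refl _⟩
  | node w l rt ihl ihr =>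
    intro h
    obtain ⟨hw, hmax, hsum, hl, hrt⟩ := h
    have Hl := ihl hl
    have Hr := ihr hrt
    refine ⟨?_, ?_⟩
    · simp only [leafSum]; linarith [Hl.1, Hr.1]
    · simp only [weight, leafSum]; linarith [Hl.2, Hr.2]

lemma weight_le_root {r lam : ℝ} (hr : 1 < r) : ∀ t : WTree, Valid r lam t →
    ∀ x ∈ t.nodeWeights, x ≤ t.weight := by
  intro t
  induction t with
  | leaf w =>
    intro h x hx
    simp only [nodeWeights, List.mem_singleton] at hx
    simp [hx, weight]
  | node w l rt ihl ihr =>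
    intro h x hx
    obtain ⟨hw, hmax, hsum, hl, hrt⟩ := h
    simp only [nodeWeights, List.mem_cons, List.mem_append] at hx
    have hdiv : w / r ≤ w := by
      rw [div_le_iff₀ (by linarith)]
      nlinarith
    rcases hx with rfl | hx | hx
    · exact le_refl _
    · exact le_trans (ihl hl x hx) (le_trans (le_trans (le_max_left _ _) hmax) hdiv)
    · exact le_trans (ihr hrt x hx) (le_trans (le_trans (le_max_right _ _) hmax) hdiv)

lemma main_count {r lam : ℝ} (hr : 1 < r) (c : ℝ) (hc : 0 < c) :
    ∀ t : WTree, Valid r lam t →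
    ((t.nodeWeights.filter (fun w => decide (c < w ∧ w ≤ r * c))).length : ℝ) * c
      < t.leafSum := by
  intro t
  induction t with
  | leaf w =>
    intro h
    simp only [nodeWeights, leafSum]
    by_cases hcw : c < w ∧ w ≤ r * c
    · simp [hcw]
    · simp [hcw]; exact h.1
  | node w l rt ihl ihr =>
    intro h
    obtain ⟨hw, hmax, hsum, hl, hrt⟩ := h
    have Hl := ihl hl
    have Hr := ihr hrt
    have Bl := valid_basic hr l hl
    have Br := valid_basic hr rt hrt
    simp only [nodeWeights, leafSum, List.filter_cons, List.filter_append,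
      List.length_append]
    by_cases hcw : c < w ∧ w ≤ r * c
    · have hle : w / r ≤ c := by
        rw [div_le_iff₀ (by linarith)]
        calc w ≤ r * c := hcw.2
        _ = c * r := mul_comm _ _
      have hlw : ∀ x ∈ l.nodeWeights, x ≤ c := fun x hx =>
        le_trans (weight_le_root hr l hl x hx)
          (le_trans (le_trans (le_max_left _ _) hmax) hle)
      have hrw : ∀ x ∈ rt.nodeWeights, x ≤ c := fun x hx =>
        le_trans (weight_le_root hr rt hrt x hx)
          (le_trans (le_trans (le_max_right _ _) hmax) hle)
      have el : l.nodeWeights.filter (fun w => decide (c < w ∧ w ≤ r * c)) = [] := by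
        rw [List.filter_eq_nil_iff]
        intro a ha
        simp only [decide_eq_true_eq, not_and]
        intro hca
        exact absurd hca (not_lt.mpr (hlw a ha))
      have er : rt.nodeWeights.filter (fun w => decide (c < w ∧ w ≤ r * c)) = [] := by
        rw [List.filter_eq_nil_iff]
        intro a ha
        simp only [decide_eq_true_eq, not_and]
        intro hca
        exact absurd hca (not_lt.mpr (hrw a ha))
      simp only [Bool.decide_and] at el er Hl Hr
      simp [hcw, el, er]
      linarith [hcw.1, Bl.2, Br.2]
    · simp only [Bool.decide_and] at Hl Hr
      simp [hcw]
      push_cast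
      linarith

end WTree

/-- Inequality (1) of the paper: the number of nodes of the recursion tree whose
weight exceeds r^{i-1}·λ (i.e. lies in the class S(i) = (r^{i-1}λ, r^iλ]) is less
than p/(r^{i-1}λ), where p is the total leaf weight. -/
theorem recursion_tree_class_count (r lam : ℝ) (hr : 1 < r) (hlam : 0 < lam)
    (t : WTree) (w₀ : ℝ) (hroot : t.weight = w₀) (hv : WTree.Valid r lam t)
    (i : ℕ) (hi : 1 ≤ i) :
    ((t.nodeWeights.filter
        (fun w => decide (r ^ (i - 1) * lam < w ∧ w ≤ r ^ i * lam))).length : ℝ)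
      < t.leafSum / (r ^ (i - 1) * lam) := by
  have hr0 : (0:ℝ) < r := by linarith
  have hc : 0 < r ^ (i - 1) * lam := by positivity
  have hpi : r ^ i = r * r ^ (i - 1) := by
    conv_lhs => rw [show i = (i - 1) + 1 from (Nat.succ_pred_eq_of_pos hi).symm]
    rw [pow_succ]; ring
  have hpow : r ^ i * lam = r * (r ^ (i - 1) * lam) := by rw [hpi]; ring
  rw [lt_div_iff₀ hc]
  have := WTree.main_count hr (r ^ (i - 1) * lam) hc t hv
  rw [hpow]
  exact this
end
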